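/- Let W = M(c,h) be a Virasoro Verma module in a Feigin–Fuchs block of type (a), (b) or (c), W_2 = M(c,h_1) the submodule generated by a singular vector s_{h_1} of level N, and π_{W_2}: W → W_2 the projection along W_1. Then for every w ∈ W and every integer m ≥ 2, π_{W_2}(L(-m)w) = L(-m)π_{W_2}(w). -/

import Mathlib

open scoped BigOperators

noncomputable section

/-- A representation of the Virasoro algebra on a `ℂ`-vector space `M`, with the
central element `k` acting by the scalar `cc`. -/
structure VirRep (M : Type) [AddCommGroup M] [Module ℂ M] : Type where
  L : ℤ → M → M
  cc : ℂ
  L_linear : ∀ n : ℤ, IsLinearMap ℂ (L n)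
  comm : ∀ (m n : ℤ) (x : M),
    L m (L n x) - L n (L m x) =
      ((m - n : ℤ) : ℂ) • L (m + n) x +
        (if m + n = 0 then ((m ^ 3 - m : ℤ) : ℂ) / 12 * cc else 0) • x

/-- Index of the standard PBW monomials `L(-p₁)⋯L(-p_t)L(-1)^q 𝟙` of a Verma module:
a weakly decreasing list of integers `≥ 2` together with the exponent `q` of `L(-1)`. -/
def VirIdx : Type := {l : List ℕ // l.Chain' (· ≥ ·) ∧ ∀ a ∈ l, 2 ≤ a} × ℕ

/-- The level of a monomial index. -/
def VirIdx.level (i : VirIdx) : ℕ := i.1.1.sum + i.2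

/-- The monomial index of `L(-1)^q 𝟙`. -/
def VirIdx.pure (q : ℕ) : VirIdx := (⟨[], List.IsChain.nil, by simp⟩, q)

/-- The monomial `L(-p₁)⋯L(-p_t)L(-1)^q v`. -/
def VirRep.monomial {M : Type} [AddCommGroup M] [Module ℂ M] (R : VirRep M) (v : M)
    (i : VirIdx) : M :=
  i.1.1.foldr (fun a acc => R.L (-(a : ℤ)) acc) ((fun x => R.L (-1) x)^[i.2] v)

/-- The Verma module `M(c,h)` for the Virasoro algebra: a representation with central
charge `c` and a highest-weight vector `hw` of weight `h` annihilated by the positive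
part, such that the standard monomials form a basis. -/
structure VirVerma (M : Type) [AddCommGroup M] [Module ℂ M] (c h : ℂ)
    extends VirRep M : Type where
  cc_eq : cc = c
  hw : M
  hw_L0 : L 0 hw = h • hw
  hw_sing : ∀ n : ℤ, 0 < n → L n hw = 0
  bas : Module.Basis VirIdx ℂ M
  bas_eq : ∀ i : VirIdx, bas i = toVirRep.monomial hw i

/-- The index `Ind(w)` of `w` (Definition 5.3 of the paper): the largest exponent `q`
of `L(-1)` occurring in the standard expression of `w`, with `Ind 0 = -1`. -/
def VirVerma.Ind {M : Type} [AddCommGroup M] [Module ℂ M] {c h : ℂ}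
    (Vm : VirVerma M c h) (w : M) : ℤ :=
  (((Vm.bas.repr w).support.image (fun i : VirIdx => (i.2 : ℤ))).max).unbotD (-1)

/-- A singular vector: annihilated by `L(n)` for all `n > 0`. -/
def IsSingular {M : Type} [AddCommGroup M] [Module ℂ M] (R : VirRep M) (w : M) : Prop :=
  ∀ n : ℤ, 0 < n → R.L n w = 0

/-- Stability of a subspace under the Virasoro action. -/
def VirInvariant {M : Type} [AddCommGroup M] [Module ℂ M] (R : VirRep M)
    (S : Submodule ℂ M) : Prop :=
  ∀ (n : ℤ) (x : M), x ∈ S → R.L n x ∈ S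

/-- The Vir-submodule generated by a subset. -/
def VirGen {M : Type} [AddCommGroup M] [Module ℂ M] (R : VirRep M) (s : Set M) :
    Submodule ℂ M :=
  sInf {U : Submodule ℂ M | VirInvariant R U ∧ s ⊆ U}

/-! An idempotent commutes with an operator as soon as its range and kernel are invariant.
The range `W₂` is a Vir-submodule. For the kernel `W₁`, write `L(-m)L(-p₁)⋯L(-p_t)L(-1)^q 𝟙`
in standard form by repeatedly swapping adjacent ascents `L(-a)L(-b)`, `a < b`, via
`[L(-a), L(-b)] = (b - a) L(-a-b)`: no step touches the factor `L(-1)^q`, so the exponent of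
`L(-1)` stays `q < N`. -/

namespace VirRep

variable {M : Type} [AddCommGroup M] [Module ℂ M] (R : VirRep M)

def mode (n : ℤ) : Module.End ℂ M :=
  IsLinearMap.mk' (R.L n) (R.L_linear n)

@[simp]
lemma mode_apply (n : ℤ) (x : M) : R.mode n x = R.L n x := rfl

def negModes (l : List ℕ) : Module.End ℂ M :=
  (l.map fun a : ℕ => R.mode (-(a : ℤ))).prod

@[simp]
lemma negModes_cons (a : ℕ) (l : List ℕ) :
    R.negModes (a :: l) = R.mode (-(a : ℤ)) * R.negModes l :=
  List.prod_cons

lemma negModes_append (u t : List ℕ) :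
    R.negModes (u ++ t) = R.negModes u * R.negModes t := by
  simp only [negModes, List.map_append, List.prod_append]

lemma mode_neg_mul_mode_neg {a b : ℕ} (hab : a + b ≠ 0) :
    R.mode (-(a : ℤ)) * R.mode (-(b : ℤ)) =
      R.mode (-(b : ℤ)) * R.mode (-(a : ℤ)) + ((b : ℂ) - a) • R.mode (-((a + b : ℕ) : ℤ)) := by
  ext x
  have hcomm := R.comm (-(a : ℤ)) (-(b : ℤ)) x
  rw [if_neg (by omega), zero_smul, add_zero, sub_eq_iff_eq_add'] at hcomm
  simp only [Module.End.mul_apply, mode_apply, LinearMap.add_apply, LinearMap.smul_apply, hcomm]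
  push_cast
  ring_nf

lemma negModes_swap (u t : List ℕ) {a b : ℕ} (hab : a + b ≠ 0) :
    R.negModes (u ++ a :: b :: t) =
      R.negModes (u ++ b :: a :: t) + ((b : ℂ) - a) • R.negModes (u ++ (a + b) :: t) := by
  simp only [negModes_append, negModes_cons, ← mul_assoc, R.mode_neg_mul_mode_neg hab,
    add_mul, mul_add, smul_mul_assoc, mul_smul_comm]

/-- `Σᵢ (i + 1) lᵢ`: it drops when an ascent `a < b` is swapped or two adjacent entries merge. -/
def positionWeight : List ℕ → ℕ
  | [] => 0
  | a :: t => a + t.sum + positionWeight t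

lemma positionWeight_append_lt {l l' : List ℕ} (u : List ℕ) (hsum : l'.sum = l.sum)
    (hlt : positionWeight l' < positionWeight l) :
    positionWeight (u ++ l') < positionWeight (u ++ l) := by
  induction u with
  | nil => exact hlt
  | cons a u ih => simp only [List.cons_append, positionWeight, List.sum_append, hsum]; omega

theorem negModes_mem_span_sorted (k : ℕ) (l : List ℕ) (hl : ∀ a ∈ l, k ≤ a) :
    R.negModes l ∈
      Submodule.span ℂ (R.negModes '' {l | l.IsChain (· ≥ ·) ∧ ∀ a ∈ l, k ≤ a}) := by
  by_cases hsorted : l.IsChain (· ≥ ·)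
  · exact Submodule.subset_span ⟨l, ⟨hsorted, hl⟩, rfl⟩
  obtain ⟨a, b, u, t, rfl, hab⟩ : ∃ a b u t, l = u ++ a :: b :: t ∧ a < b := by
    simpa [List.isChain_iff_forall_rel_of_append_cons_cons] using hsorted
  have hswap : positionWeight (u ++ b :: a :: t) < positionWeight (u ++ a :: b :: t) :=
    positionWeight_append_lt u (by simp only [List.sum_cons]; omega)
      (by simp only [positionWeight, List.sum_cons]; omega)
  have hmerge : positionWeight (u ++ (a + b) :: t) < positionWeight (u ++ a :: b :: t) :=
    positionWeight_append_lt u (by simp only [List.sum_cons]; omega)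
      (by simp only [positionWeight, List.sum_cons]; omega)
  have hl_swap : ∀ x ∈ u ++ b :: a :: t, k ≤ x := fun x hx =>
    hl x (by simp only [List.mem_append, List.mem_cons] at hx ⊢; tauto)
  have hl_merge : ∀ x ∈ u ++ (a + b) :: t, k ≤ x := by
    intro x hx
    simp only [List.mem_append, List.mem_cons] at hx
    rcases hx with hx | rfl | hx
    · exact hl x (by simp [hx])
    · exact le_add_right (hl a (by simp))
    · exact hl x (by simp [hx])
  rw [R.negModes_swap u t (by omega)]
  exact Submodule.add_mem _ (negModes_mem_span_sorted k _ hl_swap)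
    (Submodule.smul_mem _ _ (negModes_mem_span_sorted k _ hl_merge))
termination_by positionWeight l

lemma virGen_mem_invtSubmodule (s : Set M) (n : ℤ) :
    VirGen R s ∈ Module.End.invtSubmodule (R.mode n) := by
  intro x hx
  simp only [VirGen, Submodule.mem_comap, Submodule.mem_sInf] at hx ⊢
  exact fun U hU => hU.1 n x (hx U hU)

end VirRep

namespace VirVerma

variable {M : Type} [AddCommGroup M] [Module ℂ M] {c h : ℂ} (Vm : VirVerma M c h)

lemma bas_eq_negModes (i : VirIdx) :
    Vm.bas i = Vm.negModes i.1.1 ((Vm.mode (-1) ^ i.2) Vm.hw) := by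
  rw [Vm.bas_eq, VirRep.monomial, Module.End.pow_apply]
  induction i.1.1 with
  | nil => rfl
  | cons a l ih => exact congrArg (Vm.L _) ih

theorem span_bas_mem_invtSubmodule (P : ℕ → Prop) {m : ℤ} (hm : 2 ≤ m) :
    Submodule.span ℂ {x | ∃ i : VirIdx, P i.2 ∧ x = Vm.bas i} ∈
      Module.End.invtSubmodule (Vm.mode (-m)) := by
  refine Submodule.span_le.mpr ?_
  rintro _ ⟨i, hi, rfl⟩
  set v := (Vm.mode (-1) ^ i.2) Vm.hw
  have hword : Vm.mode (-m) (Vm.bas i) = Vm.negModes (m.toNat :: i.1.1) v := by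
    rw [bas_eq_negModes, VirRep.negModes_cons, Module.End.mul_apply, Int.toNat_of_nonneg (by omega)]
  have hsorted := Submodule.apply_mem_span_image_of_mem_span (LinearMap.applyₗ v)
    (Vm.negModes_mem_span_sorted 2 (m.toNat :: i.1.1) (by
      simp only [List.mem_cons, forall_eq_or_imp]; exact ⟨by omega, i.1.2.2⟩))
  rw [SetLike.mem_coe, Submodule.mem_comap, hword]
  refine Submodule.span_mono ?_ hsorted
  rintro _ ⟨_, ⟨l, hl, rfl⟩, rfl⟩
  exact ⟨(⟨l, hl⟩, i.2), hi, (Vm.bas_eq_negModes (⟨l, hl⟩, i.2)).symm⟩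

end VirVerma

theorem projection_commutes_with_negative_modes_general
    {M : Type} [AddCommGroup M] [Module ℂ M] (c h : ℂ) (Vm : VirVerma M c h)
    (N : ℕ) (s : M)
    -- the submodule `W₂` generated by `s`, the complement `W₁`, and the projection
    (W2 : Submodule ℂ M) (hW2 : W2 = VirGen Vm.toVirRep {s})
    (W1 : Submodule ℂ M)
    (hW1 : W1 = Submodule.span ℂ {x : M | ∃ i : VirIdx, i.2 < N ∧ x = Vm.bas i})
    (hcompl : IsCompl W2 W1) :
    ∀ (w : M) (m : ℤ), 2 ≤ m →
      (W2.subtype ∘ₗ Submodule.linearProjOfIsCompl W2 W1 hcompl) (Vm.L (-m) w) =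
        Vm.L (-m) ((W2.subtype ∘ₗ Submodule.linearProjOfIsCompl W2 W1 hcompl) w) := by
  intro w m hm
  have hcomm : Commute (W2.projection W1 hcompl) (Vm.mode (-m)) := by
    refine (LinearMap.IsIdempotentElem.commute_iff
      (Submodule.isIdempotentElem_projection hcompl)).mpr ⟨?_, ?_⟩
    · rw [Submodule.range_projection, hW2]
      exact Vm.virGen_mem_invtSubmodule {s} (-m)
    · rw [Submodule.ker_projection, hW1]
      exact Vm.span_bas_mem_invtSubmodule (· < N) hm
  exact LinearMap.congr_fun hcomm.eq w

/-- Proposition 5.8 of the paper.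
Let `W = M(c,h)` be a Virasoro Verma module in a Feigin–Fuchs block of type (a), (b)
or (c) (so every proper nonzero submodule is generated by a single singular vector),
let `W₂ = M(c,h₁)` be the submodule generated by a singular vector `s` of level `N`
whose standard expression has coefficient `1` of `L(-1)^N`, let
`W₁ = span{L(-n₁)⋯L(-n_s)L(-1)^n 𝟙 : n < N}` and `π_{W₂} : W → W₂` the projection
along `W₁`.  Then for every `w ∈ W` and every integer `m ≥ 2`,
`π_{W₂}(L(-m)w) = L(-m) π_{W₂}(w)`. -/
theorem projection_commutes_with_negative_modes
    {M : Type} [AddCommGroup M] [Module ℂ M] (c h : ℂ) (Vm : VirVerma M c h)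
    -- the block condition: every proper nonzero submodule is generated by one singular vector
    (hblock : ∀ U : Submodule ℂ M, VirInvariant Vm.toVirRep U → U ≠ ⊥ → U ≠ ⊤ →
      ∃ t : M, IsSingular Vm.toVirRep t ∧ U = VirGen Vm.toVirRep {t})
    -- the singular vector `s` of level `N`, normalized so that `L(-1)^N` has coefficient `1`
    (N : ℕ) (hN : 1 ≤ N) (s : M)
    (hsing : IsSingular Vm.toVirRep s)
    (hlev : ∀ i ∈ (Vm.bas.repr s).support, VirIdx.level i = N)
    (hnorm : Vm.bas.repr s (VirIdx.pure N) = 1)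
    -- the submodule `W₂` generated by `s`, the complement `W₁`, and the projection
    (W2 : Submodule ℂ M) (hW2 : W2 = VirGen Vm.toVirRep {s})
    (W1 : Submodule ℂ M)
    (hW1 : W1 = Submodule.span ℂ {x : M | ∃ i : VirIdx, i.2 < N ∧ x = Vm.bas i})
    (hcompl : IsCompl W2 W1) :
    ∀ (w : M) (m : ℤ), 2 ≤ m →
      (W2.subtype ∘ₗ Submodule.linearProjOfIsCompl W2 W1 hcompl) (Vm.L (-m) w) =
        Vm.L (-m) ((W2.subtype ∘ₗ Submodule.linearProjOfIsCompl W2 W1 hcompl) w) :=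
  projection_commutes_with_negative_modes_general c h Vm N s W2 hW2 W1 hW1 hcompl
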